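/- arXiv:1303.5136 — 2 statements merged into one kernel-verified Lean document; each statement's English description precedes it below -/
import Mathlib

section
/- If G is a minimal graph (with respect to number of vertices) such that G² is not (Δ+1)-choosable where Δ is an upper bound on the maximum degree of G, then G has no vertex of degree 1. -/
open SimpleGraph

/-- The square of a graph: vertices adjacent iff at distance at most 2. -/
def SimpleGraph.square {V : Type*} (G : SimpleGraph V) : SimpleGraph V where
  Adj u v := u ≠ v ∧ (G.Adj u v ∨ ∃ w, G.Adj u w ∧ G.Adj w v)
  symm := ⟨by
    rintro u v ⟨h, h2 | ⟨w, hw1, hw2⟩⟩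
    · exact ⟨h.symm, Or.inl h2.symm⟩
    · exact ⟨h.symm, Or.inr ⟨w, hw2.symm, hw1.symm⟩⟩⟩
  loopless := ⟨fun v h => h.1 rfl⟩

/-- A graph is `k`-choosable if from every assignment of lists of size at least `k`
there is a proper coloring. -/
def SimpleGraph.Choosable {V : Type*} (G : SimpleGraph V) (k : ℕ) : Prop :=
  ∀ L : V → Finset ℕ, (∀ v, k ≤ (L v).card) →
    ∃ c : V → ℕ, (∀ v, c v ∈ L v) ∧ ∀ ⦃u v⦄, G.Adj u v → c u ≠ c v

/-- `G.MadLT x` means the maximum average degree of `G` is less than `x`: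
every nonempty subgraph `H` satisfies `2|E(H)|/|V(H)| < x`. -/
def SimpleGraph.MadLT {V : Type*} (G : SimpleGraph V) (x : ℝ) : Prop :=
  ∀ H : G.Subgraph, H.verts.Nonempty →
    2 * (H.edgeSet.ncard : ℝ) / (H.verts.ncard : ℝ) < x


/-! If `v` is a leaf with neighbour `u`, then in `G²` the vertex `v` is adjacent only to `u` and the
other neighbours of `u`, so it has at most `Δ` neighbours there; and deleting `v` changes `G²` only
by deleting `v`, since a path of length two through `v` joins `u` to itself. By minimality the
square of `G - v` is `(Δ+1)`-choosable, and a list colouring of it extends greedily to `v`. -/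

namespace SimpleGraph

variable {V W : Type*}

theorem Embedding.ncard_neighborSet_le [Finite W] {G : SimpleGraph V} {G' : SimpleGraph W}
    (f : G ↪g G') (a : V) : (G.neighborSet a).ncard ≤ (G'.neighborSet (f a)).ncard := by
  rw [← Set.ncard_image_of_injective _ f.injective]
  exact Set.ncard_le_ncard (by rintro _ ⟨b, hb, rfl⟩; exact f.map_adj_iff.mpr hb)

def Iso.square {G : SimpleGraph V} {G' : SimpleGraph W} (e : G ≃g G') :
    G.square ≃g G'.square where
  toEquiv := e.toEquiv
  map_rel_iff' {a b} := by
    change (e a ≠ e b ∧ (G'.Adj (e a) (e b) ∨ ∃ w, G'.Adj (e a) w ∧ G'.Adj w (e b))) ↔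
      (a ≠ b ∧ (G.Adj a b ∨ ∃ w, G.Adj a w ∧ G.Adj w b))
    rw [e.injective.ne_iff, e.map_adj_iff]
    refine and_congr_right fun _ => or_congr_right ⟨?_, ?_⟩
    · rintro ⟨w, haw, hwb⟩
      refine ⟨e.symm w, ?_, ?_⟩
      · rwa [← e.map_adj_iff, e.apply_symm_apply]
      · rwa [← e.map_adj_iff, e.apply_symm_apply]
    · rintro ⟨w, haw, hwb⟩
      exact ⟨e w, e.map_adj_iff.mpr haw, e.map_adj_iff.mpr hwb⟩

namespace Choosable

variable {G G' : SimpleGraph V} {k : ℕ}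

theorem anti (hle : G ≤ G') (h : G'.Choosable k) : G.Choosable k := fun L hL =>
  let ⟨c, hcL, hc⟩ := h L hL
  ⟨c, hcL, fun _ _ huv => hc (hle huv)⟩

theorem of_iso {H : SimpleGraph W} (e : G ≃g H) (h : H.Choosable k) : G.Choosable k := by
  intro L hL
  obtain ⟨c, hcL, hc⟩ := h (L ∘ e.symm) fun w => hL _
  exact ⟨c ∘ e, fun v => by simpa using hcL (e v), fun u v huv => hc (e.map_adj_iff.mpr huv)⟩

theorem of_induce_compl_singleton (v : V) (hfin : (G.neighborSet v).Finite)
    (hv : (G.neighborSet v).ncard < k) (h : (G.induce {v}ᶜ).Choosable k) : G.Choosable k := by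
  classical
  intro L hL
  obtain ⟨c', hc'L, hc'⟩ := h (fun w => L w) fun w => hL w
  let g : V → ℕ := fun w => if hw : w ∈ ({v}ᶜ : Set V) then c' ⟨w, hw⟩ else 0
  have hg : ∀ w (hw : w ∈ ({v}ᶜ : Set V)), g w = c' ⟨w, hw⟩ := fun w hw => dif_pos hw
  have hused : (g '' G.neighborSet v).ncard < (L v).card := by
    calc (g '' G.neighborSet v).ncard ≤ (G.neighborSet v).ncard := Set.ncard_image_le hfin
      _ < k := hv
      _ ≤ (L v).card := hL v
  obtain ⟨a, haL, ha⟩ := Set.exists_mem_notMem_of_ncard_lt_ncard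
    (t := (L v : Set ℕ)) (by rwa [Set.ncard_coe_finset]) (hfin.image g)
  refine ⟨Function.update g v a, fun w => ?_, fun x y hxy => ?_⟩
  · by_cases hw : w = v
    · subst hw; simpa using haL
    · rw [Function.update_of_ne hw, hg w hw]; exact hc'L ⟨w, hw⟩
  · rcases eq_or_ne x v with rfl | hx
    · rw [Function.update_self, Function.update_of_ne hxy.ne.symm]
      exact fun hay => ha (hay ▸ Set.mem_image_of_mem g hxy)
    rcases eq_or_ne y v with rfl | hy
    · rw [Function.update_self, Function.update_of_ne hx]
      exact fun hxa => ha (hxa ▸ Set.mem_image_of_mem g hxy.symm)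
    rw [Function.update_of_ne hx, Function.update_of_ne hy, hg x hx, hg y hy]
    exact hc' hxy

end Choosable

section Leaf

variable {G : SimpleGraph V} {u v : V}

theorem ncard_neighborSet_square_le_of_neighborSet_eq_singleton (hv : G.neighborSet v = {u})
    (hfin : (G.neighborSet u).Finite) :
    (G.square.neighborSet v).ncard ≤ (G.neighborSet u).ncard := by
  have hvu : v ∈ G.neighborSet u := G.adj_symm (hv.ge rfl)
  have hsub : G.square.neighborSet v ⊆ insert u (G.neighborSet u \ {v}) := by
    rintro w ⟨hvw, hw | ⟨x, hvx, hxw⟩⟩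
    · exact .inl (hv.le hw)
    · obtain rfl : x = u := hv.le hvx
      exact .inr ⟨hxw, hvw.symm⟩
  calc (G.square.neighborSet v).ncard
      ≤ (insert u (G.neighborSet u \ {v})).ncard := Set.ncard_le_ncard hsub (hfin.sdiff.insert u)
    _ ≤ (G.neighborSet u \ {v}).ncard + 1 := Set.ncard_insert_le _ _
    _ = (G.neighborSet u).ncard := Set.ncard_sdiff_singleton_add_one hvu hfin

-- A path of length two through the leaf `v` starts and ends at `u`.
theorem square_induce_compl_le_of_neighborSet_eq_singleton (hv : G.neighborSet v = {u}) :
    G.square.induce {v}ᶜ ≤ (G.induce {v}ᶜ).square := by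
  rintro a b ⟨hab, h | ⟨w, haw, hwb⟩⟩
  · exact ⟨Subtype.coe_ne_coe.mp hab, .inl h⟩
  · have hw : w ≠ v := by
      rintro rfl
      exact hab ((hv.le haw.symm).trans (hv.le hwb).symm)
    exact ⟨Subtype.coe_ne_coe.mp hab, .inr ⟨⟨w, hw⟩, haw, hwb⟩⟩

end Leaf

end SimpleGraph

/-- A minimal (w.r.t. number of vertices) graph of maximum degree at most `Δ`
whose square is not `(Δ+1)`-choosable has no vertex of degree 1. -/
theorem no_degree_one_in_minimal {V : Type*} [Fintype V] (Δ : ℕ) (G : SimpleGraph V)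
    (hdeg : ∀ v, (G.neighborSet v).ncard ≤ Δ)
    (hnot : ¬ G.square.Choosable (Δ + 1))
    (hmin : ∀ n : ℕ, n < Fintype.card V → ∀ H : SimpleGraph (Fin n),
      (∀ v, (H.neighborSet v).ncard ≤ Δ) → H.square.Choosable (Δ + 1)) :
    ∀ v, (G.neighborSet v).ncard ≠ 1 := by
  classical
  intro v hv
  obtain ⟨u, hu⟩ := Set.ncard_eq_one.mp hv
  have hcard : Fintype.card ↥({v}ᶜ : Set V) = Fintype.card V - 1 := by
    rw [Fintype.card_compl_set, Set.card_singleton]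
  have hlt : Fintype.card V - 1 < Fintype.card V :=
    Nat.sub_lt (Fintype.card_pos_iff.mpr ⟨v⟩) one_pos
  let e := (G.induce {v}ᶜ).overFinIso hcard
  have hdeg' : ∀ a, ((G.induce {v}ᶜ).overFin hcard |>.neighborSet a).ncard ≤ Δ := fun a =>
    (Embedding.ncard_neighborSet_le (e.symm.toEmbedding.trans (Embedding.induce _)) a).trans
      (hdeg _)
  refine hnot (Choosable.of_induce_compl_singleton v (Set.toFinite _) ?_ ?_)
  · exact Nat.lt_succ_of_le ((ncard_neighborSet_square_le_of_neighborSet_eq_singleton hu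
      (Set.toFinite _)).trans (hdeg u))
  · exact ((hmin _ hlt _ hdeg').of_iso e.square).anti
      (square_induce_compl_le_of_neighborSet_eq_singleton hu)
end

section
/- Let k ≥ 4 and let G be a graph with maximum degree at most k containing a path v₀v₁v₂v₃v₄v₅ where v₁, v₂, v₃, v₄ all have degree 2 in G (a 4-thread). If the square of G − v₂ − v₃ is (k+1)-choosable, then the square of G is (k+1)-choosable. -/
open SimpleGraph

/-!
Colour `G² - {v₂, v₃}` first: it is the square of `G - v₂ - v₃`, because neither `v₂` nor `v₃` is
the middle of a path of length two between vertices outside `{v₂, v₃}`. In `G²` the vertex `v₃`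
then sees only the three coloured vertices `v₁, v₄, v₅`, and afterwards `v₂` sees the four
coloured vertices `v₀, v₁, v₃, v₄`; lists of size `k + 1 ≥ 5` leave a free colour for both.
-/

namespace SimpleGraph

variable {V : Type*}

lemma adj_eq_or_eq_of_ncard_neighborSet_eq_two {G : SimpleGraph V} {x a b y : V}
    (h : (G.neighborSet x).ncard = 2) (ha : G.Adj x a) (hb : G.Adj x b) (hab : a ≠ b)
    (hy : G.Adj x y) : y = a ∨ y = b := by
  have hpair : G.neighborSet x = {a, b} :=
    (Set.eq_of_subset_of_ncard_le (t := G.neighborSet x)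
      (Set.insert_subset ha (Set.singleton_subset_iff.mpr hb))
      (by rw [h, Set.ncard_pair hab]) (Set.finite_of_ncard_ne_zero (by omega))).symm
  have hy' : y ∈ G.neighborSet x := hy
  simpa [hpair] using hy'

lemma square_adj_of_thread {G : SimpleGraph V} {p a x b q y : V}
    (hx : ∀ z, G.Adj x z → z = a ∨ z = b) (ha : ∀ z, G.Adj a z → z = p ∨ z = x)
    (hb : ∀ z, G.Adj b z → z = x ∨ z = q) (hy : G.square.Adj x y) :
    y = p ∨ y = a ∨ y = b ∨ y = q := by
  obtain ⟨hne, hxy | ⟨w, hxw, hwy⟩⟩ := hy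
  · rcases hx y hxy with rfl | rfl <;> simp
  · rcases hx w hxw with rfl | rfl
    · rcases ha y hwy with rfl | rfl <;> simp_all
    · rcases hb y hwy with rfl | rfl <;> simp_all

lemma square_induce_le_induce_square {G : SimpleGraph V} {S : Set V}
    (hS : ∀ x ∉ S, ∀ u ∈ S, ∀ w ∈ S, G.Adj x u → G.Adj x w → u = w) :
    G.square.induce S ≤ (G.induce S).square := by
  rintro ⟨u, hu⟩ ⟨w, hw⟩ ⟨hne, huw | ⟨x, hux, hxw⟩⟩
  · exact ⟨fun h => hne (congrArg Subtype.val h), Or.inl huw⟩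
  by_cases hx : x ∈ S
  · exact ⟨fun h => hne (congrArg Subtype.val h), Or.inr ⟨⟨x, hx⟩, hux, hxw⟩⟩
  · exact absurd (hS x hx u hu w hw hux.symm hxw) hne

lemma Choosable.anti_s5 {H H' : SimpleGraph V} {n : ℕ} (hle : H ≤ H') (h : H'.Choosable n) :
    H.Choosable n := by
  intro L hL
  obtain ⟨c, hcL, hc⟩ := h L hL
  exact ⟨c, hcL, fun u w huw => hc (hle huw)⟩

def IsListColoringOn (H : SimpleGraph V) (L : V → Finset ℕ) (S : Set V) (c : V → ℕ) : Prop :=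
  (∀ x ∈ S, c x ∈ L x) ∧ ∀ ⦃u⦄, u ∈ S → ∀ ⦃w⦄, w ∈ S → H.Adj u w → c u ≠ c w

lemma Choosable.exists_isListColoringOn {H : SimpleGraph V} {S : Set V} {n : ℕ}
    (h : (H.induce S).Choosable n) {L : V → Finset ℕ} (hL : ∀ x, n ≤ (L x).card) :
    ∃ c, H.IsListColoringOn L S c := by
  classical
  obtain ⟨c, hcL, hc⟩ := h (fun x => L x) (fun x => hL x)
  refine ⟨fun x => if hx : x ∈ S then c ⟨x, hx⟩ else 0, fun x hx => ?_, fun u hu w hw huw => ?_⟩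
  · simpa [hx] using hcL ⟨x, hx⟩
  · simpa [hu, hw] using hc (show (H.induce S).Adj ⟨u, hu⟩ ⟨w, hw⟩ from huw)

lemma IsListColoringOn.exists_update {H : SimpleGraph V} [DecidableEq V] {L : V → Finset ℕ}
    {S : Set V} {c : V → ℕ} (hc : H.IsListColoringOn L S c) {x : V} (N : Finset V)
    (hN : ∀ y ∈ S, H.Adj x y → y ∈ N) (hcard : N.card < (L x).card) :
    ∃ a, H.IsListColoringOn L (insert x S) (Function.update c x a) := by
  obtain ⟨a, haL, ha⟩ := Finset.exists_mem_notMem_of_card_lt_card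
    (Finset.card_image_le.trans_lt hcard : (N.image c).card < (L x).card)
  have hfree : ∀ y ∈ S, H.Adj x y → c y ≠ a := fun y hy hxy h =>
    ha (Finset.mem_image.mpr ⟨y, hN y hy hxy, h⟩)
  refine ⟨a, fun y hy => ?_, fun u hu w hw huw => ?_⟩
  · by_cases hyx : y = x
    · subst hyx; simpa using haL
    · simpa [hyx] using hc.1 y (hy.resolve_left hyx)
  · rcases eq_or_ne u x with rfl | hux <;> rcases eq_or_ne w u with rfl | hwu
    · exact absurd rfl huw.ne
    · have hw' := hw.resolve_left hwu
      simpa [hwu] using (hfree w hw' huw).symm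
    · exact absurd rfl huw.ne
    rcases eq_or_ne w x with rfl | hwx
    · simpa [hux] using hfree u (hu.resolve_left hux) huw.symm
    · simpa [hux, hwx] using hc.2 (hu.resolve_left hux) (hw.resolve_left hwx) huw

lemma choosable_square_of_thread {G : SimpleGraph V} {n : ℕ} (hn : 5 ≤ n)
    {v₀ v₁ v₂ v₃ v₄ v₅ : V} (h₁ : ∀ z, G.Adj v₁ z → z = v₀ ∨ z = v₂)
    (h₂ : ∀ z, G.Adj v₂ z → z = v₁ ∨ z = v₃) (h₃ : ∀ z, G.Adj v₃ z → z = v₂ ∨ z = v₄)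
    (h₄ : ∀ z, G.Adj v₄ z → z = v₃ ∨ z = v₅)
    (h : (G.induce {x | x ≠ v₂ ∧ x ≠ v₃}).square.Choosable n) : G.square.Choosable n := by
  classical
  intro L hL
  set S : Set V := {x | x ≠ v₂ ∧ x ≠ v₃}
  have hS : ∀ x ∉ S, ∀ u ∈ S, ∀ w ∈ S, G.Adj x u → G.Adj x w → u = w := by
    intro x hx u hu w hw hxu hxw
    obtain rfl | rfl : x = v₂ ∨ x = v₃ := by simpa [S, or_iff_not_imp_left] using hx
    · rcases h₂ u hxu with rfl | rfl <;> rcases h₂ w hxw with rfl | rfl <;> simp_all [S]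
    · rcases h₃ u hxu with rfl | rfl <;> rcases h₃ w hxw with rfl | rfl <;> simp_all [S]
  obtain ⟨c, hc⟩ := (h.anti_s5 (square_induce_le_induce_square hS)).exists_isListColoringOn hL
  obtain ⟨a₃, hc₃⟩ := hc.exists_update {v₁, v₄, v₅}
    (fun y hy hy₃ => by
      rcases square_adj_of_thread h₃ h₂ h₄ hy₃ with rfl | rfl | rfl | rfl
      exacts [by simp, absurd rfl hy.1, by simp, by simp])
    (Finset.card_le_three.trans_lt (by have := hL v₃; omega))
  obtain ⟨a₂, hc₂⟩ := hc₃.exists_update {v₀, v₁, v₃, v₄}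
    (fun y _ hy₂ => by
      rcases square_adj_of_thread h₂ h₁ h₃ hy₂ with rfl | rfl | rfl | rfl <;> simp)
    (Finset.card_le_four.trans_lt (by have := hL v₂; omega))
  have huniv : insert v₂ (insert v₃ S) = Set.univ :=
    Set.eq_univ_of_forall fun x => by
      simp only [Set.mem_insert_iff, S, Set.mem_ofPred_eq]
      tauto
  rw [huniv] at hc₂
  exact ⟨_, fun x => hc₂.1 x trivial, fun u w huw => hc₂.2 trivial trivial huw⟩

end SimpleGraph

theorem fourThread_reducible_general {V : Type*} (k : ℕ) (hk : 4 ≤ k)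
    (G : SimpleGraph V)
    (v : Fin 6 → V) (hinj : Function.Injective v)
    (hpath : ∀ i : Fin 5, G.Adj (v i.castSucc) (v i.succ))
    (hdeg2 : ∀ i : Fin 6, i ≠ 0 → i ≠ 5 → (G.neighborSet (v i)).ncard = 2)
    (hred : ((G.induce {x | x ≠ v 2 ∧ x ≠ v 3}).square.Choosable (k + 1))) :
    G.square.Choosable (k + 1) := by
  have hv : ∀ {i j : Fin 6}, i ≠ j → v i ≠ v j := hinj.ne
  have h01 : G.Adj (v 0) (v 1) := hpath 0
  have h12 : G.Adj (v 1) (v 2) := hpath 1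
  have h23 : G.Adj (v 2) (v 3) := hpath 2
  have h34 : G.Adj (v 3) (v 4) := hpath 3
  have h45 : G.Adj (v 4) (v 5) := hpath 4
  exact choosable_square_of_thread (by omega)
    (fun _ => adj_eq_or_eq_of_ncard_neighborSet_eq_two
      (hdeg2 1 (by decide) (by decide)) h01.symm h12 (hv (by decide)))
    (fun _ => adj_eq_or_eq_of_ncard_neighborSet_eq_two
      (hdeg2 2 (by decide) (by decide)) h12.symm h23 (hv (by decide)))
    (fun _ => adj_eq_or_eq_of_ncard_neighborSet_eq_two
      (hdeg2 3 (by decide) (by decide)) h23.symm h34 (hv (by decide)))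
    (fun _ => adj_eq_or_eq_of_ncard_neighborSet_eq_two
      (hdeg2 4 (by decide) (by decide)) h34.symm h45 (hv (by decide)))
    hred

/-- (C1): a 4-thread is `(k+1)`-reducible, `k ≥ 4`. -/
theorem fourThread_reducible {V : Type*} [Fintype V] (k : ℕ) (hk : 4 ≤ k)
    (G : SimpleGraph V) (hΔ : ∀ x, (G.neighborSet x).ncard ≤ k)
    (v : Fin 6 → V) (hinj : Function.Injective v)
    (hpath : ∀ i : Fin 5, G.Adj (v i.castSucc) (v i.succ))
    (hdeg2 : ∀ i : Fin 6, i ≠ 0 → i ≠ 5 → (G.neighborSet (v i)).ncard = 2)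
    (hred : ((G.induce {x | x ≠ v 2 ∧ x ≠ v 3}).square.Choosable (k + 1))) :
    G.square.Choosable (k + 1) :=
  fourThread_reducible_general k hk G v hinj hpath hdeg2 hred
end
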